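/- For every θ ∈ (0, π/2): lim_{k → 0⁺} (1 / ln(1/k)) ∫₁^{∞} ( e^{-2kρ cos θ} / ρ ) sin²(θ + kρ sin θ) dρ = sin² θ. -/

import Mathlib

/-!
Put `a = 2 k cos θ`. The weight `e^{-aρ}/ρ` has mass `log (1/k) + O(1)` on `(1, ∞)`: up to
`ρ = 1/k` it differs from `1/ρ` by at most `a`, and beyond `1/k` its mass is `O(1)`.
Replacing `sin² (θ + kρ sin θ)` by `sin² θ` costs at most `2kρ` pointwise, which integrates
against the weight to `O(k/a) = O(1)`. Dividing by `log (1/k) → ∞` gives the limit.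
-/

open MeasureTheory Real Filter Set Topology

lemma abs_sin_sq_sub_sin_sq_le (x y : ℝ) : |sin x ^ 2 - sin y ^ 2| ≤ 2 * |x - y| := by
  have hsum : |sin x + sin y| ≤ 2 :=
    (abs_add_le _ _).trans (by linarith [abs_sin_le_one x, abs_sin_le_one y])
  calc |sin x ^ 2 - sin y ^ 2| = |sin x - sin y| * |sin x + sin y| := by
        rw [← abs_mul]; ring_nf
    _ ≤ |x - y| * 2 := mul_le_mul (abs_sin_sub_sin_le x y) hsum (abs_nonneg _) (abs_nonneg _)
    _ = 2 * |x - y| := mul_comm _ _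

lemma Filter.Tendsto.one_div_mul_of_abs_sub_mul_le {α : Type*} {l : Filter α} {u F : α → ℝ}
    {L M : ℝ} (hu : Tendsto u l atTop) (hF : ∀ᶠ x in l, |F x - L * u x| ≤ M) :
    Tendsto (fun x => 1 / u x * F x) l (𝓝 L) := by
  rw [← tendsto_sub_nhds_zero_iff]
  refine squeeze_zero_norm' (a := fun x => M / u x) ?_ (tendsto_const_nhds.div_atTop hu)
  filter_upwards [hF, hu.eventually_gt_atTop 0] with x hFx hux
  rw [norm_eq_abs, show 1 / u x * F x - L = (F x - L * u x) / u x by field_simp, abs_div,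
    abs_of_pos hux]
  gcongr

lemma tendsto_log_one_div_nhdsGT_zero : Tendsto (fun k : ℝ => log (1 / k)) (𝓝[>] 0) atTop := by
  simpa only [one_div, Function.comp_def] using tendsto_log_atTop.comp tendsto_inv_nhdsGT_zero

section ExponentialIntegral

variable {a : ℝ}

lemma integral_exp_neg_mul_Ioi (ha : 0 < a) (c : ℝ) :
    ∫ x in Ioi c, exp (-a * x) = exp (-a * c) / a := by
  rw [integral_exp_mul_Ioi (neg_lt_zero.2 ha), neg_div_neg_eq]

lemma integrableOn_exp_neg_mul_div_Ioi (ha : 0 < a) {c : ℝ} (hc : 0 < c) :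
    IntegrableOn (fun ρ => exp (-a * ρ) / ρ) (Ioi c) := by
  refine ((exp_neg_integrableOn_Ioi c ha).div_const c).mono'
    (by fun_prop : Measurable fun ρ : ℝ => exp (-a * ρ) / ρ).aestronglyMeasurable ?_
  filter_upwards [ae_restrict_mem measurableSet_Ioi] with ρ (hρ : c < ρ)
  rw [norm_of_nonneg (div_nonneg (exp_pos _).le (hc.trans hρ).le)]
  exact div_le_div_of_nonneg_left (exp_pos _).le hc hρ.le

lemma abs_integral_Ioc_exp_neg_mul_div_sub_log_le (ha : 0 < a) {b : ℝ} (hb : 1 ≤ b) :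
    |(∫ ρ in Ioc 1 b, exp (-a * ρ) / ρ) - log b| ≤ a * b := by
  have hlog : ∫ ρ in Ioc 1 b, 1 / ρ = log b := by
    rw [← intervalIntegral.integral_of_le hb, integral_one_div_of_pos one_pos (by linarith),
      div_one]
  have hinv : IntegrableOn (fun ρ : ℝ => 1 / ρ) (Ioc 1 b) :=
    (continuousOn_const.div continuousOn_id fun ρ hρ =>
      (zero_lt_one.trans_le hρ.1).ne').integrableOn_Icc.mono_set Ioc_subset_Icc_self
  rw [← hlog, ← integral_sub ((integrableOn_exp_neg_mul_div_Ioi ha one_pos).mono_set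
    Ioc_subset_Ioi_self) hinv, ← norm_eq_abs]
  have hbound : ∀ ρ ∈ Ioc (1 : ℝ) b, ‖exp (-a * ρ) / ρ - 1 / ρ‖ ≤ a := by
    rintro ρ ⟨hρ, -⟩
    have hρ0 : 0 < ρ := one_pos.trans hρ
    rw [← sub_div, norm_div, norm_of_nonneg hρ0.le, div_le_iff₀ hρ0, norm_eq_abs,
      abs_of_nonpos (by simp [mul_nonneg ha.le hρ0.le])]
    linarith [add_one_le_exp (-a * ρ)]
  refine (norm_setIntegral_le_of_norm_le_const measure_Ioc_lt_top hbound).trans ?_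
  rw [volume_real_Ioc_of_le hb]
  nlinarith

lemma integral_Ioi_exp_neg_mul_div_le (ha : 0 < a) {b : ℝ} (hb : 0 < b) :
    ∫ ρ in Ioi b, exp (-a * ρ) / ρ ≤ exp (-a * b) / (a * b) :=
  calc ∫ ρ in Ioi b, exp (-a * ρ) / ρ ≤ ∫ ρ in Ioi b, exp (-a * ρ) / b :=
        setIntegral_mono_on (integrableOn_exp_neg_mul_div_Ioi ha hb)
          ((exp_neg_integrableOn_Ioi b ha).div_const b) measurableSet_Ioi
          fun ρ (hρ : b < ρ) => div_le_div_of_nonneg_left (exp_pos _).le hb hρ.le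
    _ = exp (-a * b) / (a * b) := by
        rw [integral_div, integral_exp_neg_mul_Ioi ha, div_div]

lemma abs_integral_exp_neg_mul_div_sub_log_le (ha : 0 < a) {b : ℝ} (hb : 1 ≤ b) :
    |(∫ ρ in Ioi 1, exp (-a * ρ) / ρ) - log b| ≤ a * b + exp (-a * b) / (a * b) := by
  have hb0 : 0 < b := one_pos.trans_le hb
  have htail_nonneg : 0 ≤ ∫ ρ in Ioi b, exp (-a * ρ) / ρ :=
    setIntegral_nonneg measurableSet_Ioi fun ρ (hρ : b < ρ) =>
      div_nonneg (exp_pos _).le (hb0.trans hρ).le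
  have hsplit : ∫ ρ in Ioi 1, exp (-a * ρ) / ρ =
      (∫ ρ in Ioc 1 b, exp (-a * ρ) / ρ) + ∫ ρ in Ioi b, exp (-a * ρ) / ρ := by
    rw [← setIntegral_union Ioc_disjoint_Ioi_same measurableSet_Ioi
      ((integrableOn_exp_neg_mul_div_Ioi ha one_pos).mono_set Ioc_subset_Ioi_self)
      (integrableOn_exp_neg_mul_div_Ioi ha hb0), Ioc_union_Ioi_eq_Ioi hb]
  rw [hsplit, add_sub_right_comm]
  exact (abs_add_le _ _).trans (add_le_add (abs_integral_Ioc_exp_neg_mul_div_sub_log_le ha hb)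
    ((abs_of_nonneg htail_nonneg).trans_le (integral_Ioi_exp_neg_mul_div_le ha hb0)))

lemma abs_integral_exp_neg_mul_div_mul_sub_le (ha : 0 < a) {φ : ℝ → ℝ} (hφ : Measurable φ)
    {c L : ℝ} (hφc : ∀ ρ, 1 < ρ → |φ ρ - c| ≤ L * ρ) :
    |(∫ ρ in Ioi 1, exp (-a * ρ) / ρ * φ ρ) - c * ∫ ρ in Ioi 1, exp (-a * ρ) / ρ| ≤
      L * exp (-a) / a := by
  have hbound : ∀ᵐ ρ ∂volume.restrict (Ioi 1),
      ‖exp (-a * ρ) / ρ * (φ ρ - c)‖ ≤ L * exp (-a * ρ) := by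
    filter_upwards [ae_restrict_mem measurableSet_Ioi] with ρ (hρ : 1 < ρ)
    have hρ0 : 0 < ρ := one_pos.trans hρ
    rw [norm_mul, norm_of_nonneg (div_nonneg (exp_pos _).le hρ0.le), norm_eq_abs]
    calc exp (-a * ρ) / ρ * |φ ρ - c| ≤ exp (-a * ρ) / ρ * (L * ρ) := by
          gcongr; exact hφc ρ hρ
      _ = L * exp (-a * ρ) := by field_simp
  have hexp : IntegrableOn (fun ρ => L * exp (-a * ρ)) (Ioi 1) :=
    (exp_neg_integrableOn_Ioi 1 ha).const_mul L
  have hdiff : IntegrableOn (fun ρ => exp (-a * ρ) / ρ * (φ ρ - c)) (Ioi 1) :=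
    hexp.mono'
      (by fun_prop : Measurable fun ρ => exp (-a * ρ) / ρ * (φ ρ - c)).aestronglyMeasurable hbound
  have hsplit : ∫ ρ in Ioi 1, exp (-a * ρ) / ρ * φ ρ =
      (∫ ρ in Ioi 1, exp (-a * ρ) / ρ * (φ ρ - c)) + c * ∫ ρ in Ioi 1, exp (-a * ρ) / ρ := by
    rw [← integral_const_mul, ← integral_add hdiff
      ((integrableOn_exp_neg_mul_div_Ioi ha one_pos).const_mul c)]
    congr 1 with ρ
    ring
  rw [hsplit, add_sub_cancel_right, ← norm_eq_abs]
  refine (norm_integral_le_of_norm_le hexp hbound).trans_eq ?_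
  rw [integral_const_mul, integral_exp_neg_mul_Ioi ha, mul_one, mul_div_assoc]

lemma abs_integral_exp_neg_mul_div_mul_sin_sq_sub_log_le (ha : 0 < a) {b : ℝ} (hb : 1 ≤ b)
    (θ ω : ℝ) :
    |(∫ ρ in Ioi 1, exp (-a * ρ) / ρ * sin (θ + ω * ρ) ^ 2) - sin θ ^ 2 * log b| ≤
      2 * |ω| * exp (-a) / a + (a * b + exp (-a * b) / (a * b)) := by
  have hφ : ∀ ρ : ℝ, 1 < ρ → |sin (θ + ω * ρ) ^ 2 - sin θ ^ 2| ≤ 2 * |ω| * ρ := by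
    intro ρ hρ
    refine (abs_sin_sq_sub_sin_sq_le _ _).trans_eq ?_
    rw [add_sub_cancel_left, abs_mul, abs_of_pos (one_pos.trans hρ), mul_assoc]
  calc |(∫ ρ in Ioi 1, exp (-a * ρ) / ρ * sin (θ + ω * ρ) ^ 2) - sin θ ^ 2 * log b|
      = |((∫ ρ in Ioi 1, exp (-a * ρ) / ρ * sin (θ + ω * ρ) ^ 2) -
          sin θ ^ 2 * ∫ ρ in Ioi 1, exp (-a * ρ) / ρ) +
          sin θ ^ 2 * ((∫ ρ in Ioi 1, exp (-a * ρ) / ρ) - log b)| := by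
        congr 1; ring
    _ ≤ 2 * |ω| * exp (-a) / a + 1 * (a * b + exp (-a * b) / (a * b)) := by
        refine (abs_add_le _ _).trans (add_le_add
          (abs_integral_exp_neg_mul_div_mul_sub_le ha (by fun_prop) hφ) ?_)
        rw [abs_mul, abs_of_nonneg (sq_nonneg _)]
        exact mul_le_mul (sin_sq_le_one θ) (abs_integral_exp_neg_mul_div_sub_log_le ha hb)
          (abs_nonneg _) zero_le_one
    _ = 2 * |ω| * exp (-a) / a + (a * b + exp (-a * b) / (a * b)) := by rw [one_mul]

end ExponentialIntegral

lemma abs_integral_exp_div_mul_sin_sq_sub_log_le {θ k : ℝ} (hcos : 0 < cos θ)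
    (hk : k ∈ Ioc 0 1) :
    |(∫ ρ in Ioi (1 : ℝ), exp (-2 * k * ρ * cos θ) / ρ * sin (θ + k * ρ * sin θ) ^ 2) -
      sin θ ^ 2 * log (1 / k)| ≤ 2 + 2 / cos θ := by
  obtain ⟨hk0, hk1⟩ := hk
  have ha : 0 < 2 * k * cos θ := by positivity
  have hintegrand : ∀ ρ, exp (-2 * k * ρ * cos θ) / ρ * sin (θ + k * ρ * sin θ) ^ 2 =
      exp (-(2 * k * cos θ) * ρ) / ρ * sin (θ + k * sin θ * ρ) ^ 2 := fun ρ => by ring_nf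
  simp_rw [hintegrand]
  refine (abs_integral_exp_neg_mul_div_mul_sin_sq_sub_log_le ha (one_le_one_div hk0 hk1) θ
    (k * sin θ)).trans ?_
  have hab : 2 * k * cos θ * (1 / k) = 2 * cos θ := by field_simp
  have hexp_le (x : ℝ) (hx : 0 ≤ x) : exp (-x) ≤ 1 := exp_le_one_iff.2 (neg_nonpos.2 hx)
  have hpert_le : 2 * |k * sin θ| * exp (-(2 * k * cos θ)) / (2 * k * cos θ) ≤ 1 / cos θ := by
    calc 2 * |k * sin θ| * exp (-(2 * k * cos θ)) / (2 * k * cos θ)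
        = |sin θ| * exp (-(2 * k * cos θ)) / cos θ := by
          rw [abs_mul, abs_of_pos hk0]; field_simp
      _ ≤ 1 / cos θ := div_le_div_of_nonneg_right
          (mul_le_one₀ (abs_sin_le_one θ) (exp_pos _).le (hexp_le _ ha.le)) hcos.le
  have htail_le : exp (-(2 * cos θ)) / (2 * cos θ) ≤ 1 / cos θ := by
    rw [div_le_div_iff₀ (by positivity) hcos]
    nlinarith [hexp_le (2 * cos θ) (by positivity)]
  rw [neg_mul, hab]
  linarith [cos_le_one θ, show 2 / cos θ = 1 / cos θ + 1 / cos θ by ring]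

theorem stmt_13 (θ : ℝ) (hθ : θ ∈ Set.Ioo 0 (π / 2)) :
    Tendsto (fun k : ℝ =>
        (1 / Real.log (1 / k)) *
          ∫ ρ in Set.Ioi (1 : ℝ),
            Real.exp (-2 * k * ρ * Real.cos θ) / ρ * Real.sin (θ + k * ρ * Real.sin θ) ^ 2)
      (nhdsWithin 0 (Set.Ioi 0)) (nhds (Real.sin θ ^ 2)) := by
  have hcos : 0 < cos θ := cos_pos_of_mem_Ioo ⟨by linarith [pi_pos, hθ.1], hθ.2⟩
  refine tendsto_log_one_div_nhdsGT_zero.one_div_mul_of_abs_sub_mul_le (M := 2 + 2 / cos θ) ?_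
  filter_upwards [Ioc_mem_nhdsGT zero_lt_one] with k hk
  exact abs_integral_exp_div_mul_sin_sq_sub_log_le hcos hk
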